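/- arXiv:2011.03719 — 10 statements merged into one kernel-verified Lean document; each statement's English description precedes it below -/
import Mathlib

section
/- Let W be a window with −W = {a₀, a₀+1, …, b₀} and assume |W| ≥ η₊. Then the window skeleton and the positive cylindrical GIT-quotient skeleton agree over the region where μ exceeds b₀: {(x,ξ) ∈ Λ̃_W : μ(x) > b₀} = {(x,ξ) ∈ Λ_N⁺ : μ(x) > b₀}. -/
open Finset

/-- Theorem (thm:slice, part 1): if `|W| ≥ η₊`, the window skeleton `Λ̃_W` agrees with the
positive cylindrical GIT-quotient skeleton `Λ_N⁺` over the region `μ(x) > b₀`. -/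
theorem window_skeleton_eq_positive_skeleton_above
    (N : ℕ) (hN : 1 ≤ N) (a : Fin N → ℤ) (ha : ∀ i, a i ≠ 0)
    (hpos : ∃ i, 0 < a i) (hneg : ∃ i, a i < 0)
    (a₀ b₀ : ℤ) (hab : a₀ ≤ b₀)
    (hW : (∑ i ∈ univ.filter fun i => 0 < a i, a i) ≤ b₀ - a₀ + 1) :
    {p : (Fin N → ℝ) × (Fin N → ℝ) |
        (∃ v : Fin N → ℤ,
            (a₀ ≤ ∑ i, a i * v i ∧ ∑ i, a i * v i ≤ b₀) ∧
            ∀ i, (v i : ℝ) ≤ p.1 i ∧ p.2 i ≤ 0 ∧ (p.2 i < 0 → p.1 i = (v i : ℝ))) ∧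
        (b₀ : ℝ) < ∑ i, (a i : ℝ) * p.1 i} =
    {p : (Fin N → ℝ) × (Fin N → ℝ) |
        ((∀ i, p.2 i ≤ 0 ∧ (p.2 i < 0 → ∃ z : ℤ, p.1 i = (z : ℝ))) ∧
          ¬ ({i | 0 < a i} ⊆ {i | p.2 i < 0})) ∧
        (b₀ : ℝ) < ∑ i, (a i : ℝ) * p.1 i} := by
  ext ⟨x, ξ⟩
  simp only [Set.mem_setOf_eq]
  constructor
  · rintro ⟨⟨v, ⟨hva, hvb⟩, hv⟩, hμ⟩
    refine ⟨⟨fun i => ⟨(hv i).2.1, fun h => ⟨v i, (hv i).2.2 h⟩⟩, ?_⟩, hμ⟩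
    intro hsub
    apply absurd hμ
    push_neg
    calc ∑ i, (a i : ℝ) * x i ≤ ∑ i, (a i : ℝ) * (v i : ℝ) := by
          apply Finset.sum_le_sum
          intro i _
          rcases (ha i).lt_or_gt with hai | hai
          · exact mul_le_mul_of_nonpos_left (hv i).1 (by exact_mod_cast hai.le)
          · rw [(hv i).2.2 (hsub hai)]
      _ = ((∑ i, a i * v i : ℤ) : ℝ) := by push_cast; rfl
      _ ≤ (b₀ : ℝ) := by exact_mod_cast hvb
  · rintro ⟨⟨h1, h2⟩, hμ⟩
    rw [Set.not_subset] at h2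
    obtain ⟨j, hj1, hj2⟩ := h2
    simp only [Set.mem_setOf_eq] at hj1 hj2
    set S : ℤ := ∑ i, a i * ⌊x i⌋ with hS
    set η : ℤ := ∑ i ∈ univ.filter fun i => 0 < a i, a i with hη
    have haj1 : 1 ≤ a j := hj1
    have hajη : a j ≤ η := by
      rw [hη]
      refine Finset.single_le_sum (fun i hi => ?_) ?_
      · exact (Finset.mem_filter.mp hi).2.le
      · simp [hj1]
    -- key inequality : μ(x) < S + η
    have hkey : ∑ i, (a i : ℝ) * x i < (S : ℝ) + (η : ℝ) := by
      have hcast : (S : ℝ) = ∑ i, (a i : ℝ) * (⌊x i⌋ : ℝ) := by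
        rw [hS]; push_cast; rfl
      have hηcast : (η : ℝ) = ∑ i ∈ univ.filter fun i => 0 < a i, (a i : ℝ) := by
        rw [hη]; push_cast; rfl
      rw [hcast, hηcast,
        ← Finset.sum_filter_add_sum_filter_not univ (fun i => 0 < a i)
          (fun i => (a i : ℝ) * x i),
        ← Finset.sum_filter_add_sum_filter_not univ (fun i => 0 < a i)
          (fun i => (a i : ℝ) * (⌊x i⌋ : ℝ))]
      have h1' : ∑ i ∈ univ.filter fun i => 0 < a i, (a i : ℝ) * x i <
          ∑ i ∈ univ.filter fun i => 0 < a i,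
            ((a i : ℝ) * (⌊x i⌋ : ℝ) + (a i : ℝ)) := by
        apply Finset.sum_lt_sum_of_nonempty
        · exact ⟨j, by simp [hj1]⟩
        · intro i hi
          have hai : (0 : ℝ) < (a i : ℝ) := by
            exact_mod_cast (Finset.mem_filter.mp hi).2
          have := Int.lt_floor_add_one (x i)
          nlinarith
      have h2' : ∑ i ∈ univ.filter (fun i => ¬ 0 < a i), (a i : ℝ) * x i ≤
          ∑ i ∈ univ.filter (fun i => ¬ 0 < a i), (a i : ℝ) * (⌊x i⌋ : ℝ) := by
        apply Finset.sum_le_sum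
        intro i hi
        have hai : (a i : ℝ) ≤ 0 := by
          exact_mod_cast (not_lt.mp (Finset.mem_filter.mp hi).2)
        have := Int.floor_le (x i)
        nlinarith
      rw [Finset.sum_add_distrib] at h1'
      linarith
    have hηpos : 0 < η := lt_of_lt_of_le hj1 hajη
    have hSa₀ : a₀ ≤ S := by
      have hηle : (η : ℝ) ≤ (b₀ : ℝ) - a₀ + 1 := by exact_mod_cast hW
      have h3 : ((a₀ - 1 : ℤ) : ℝ) < (S : ℝ) := by push_cast; linarith
      have := (@Int.cast_lt ℝ _ _ _).mp h3
      omega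
    set k : ℤ := (S - a₀) / a j with hk
    set r : ℤ := (S - a₀) % a j with hr
    have hk0 : 0 ≤ k := Int.ediv_nonneg (by omega) (by omega)
    have hr0 : 0 ≤ r := Int.emod_nonneg _ (by omega)
    have hr1 : r < a j := Int.emod_lt_of_pos _ hj1
    have hdiv : a j * k + r = S - a₀ := Int.mul_ediv_add_emod _ _
    have hsum : ∑ i, a i * (⌊x i⌋ - if i = j then k else 0) = S - a j * k := by
      simp only [mul_sub, Finset.sum_sub_distrib, mul_ite, mul_zero, ← hS]
      rw [Finset.sum_ite_eq' univ j (fun i => a i * k)]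
      simp
    refine ⟨⟨fun i => ⌊x i⌋ - if i = j then k else 0, ⟨?_, ?_⟩, ?_⟩, hμ⟩
    · show a₀ ≤ ∑ i, a i * (⌊x i⌋ - if i = j then k else 0)
      rw [hsum]; omega
    · show (∑ i, a i * (⌊x i⌋ - if i = j then k else 0)) ≤ b₀
      rw [hsum]; omega
    · intro i
      refine ⟨?_, (h1 i).1, ?_⟩
      · show ((⌊x i⌋ - if i = j then k else 0 : ℤ) : ℝ) ≤ x i
        rcases eq_or_ne i j with rfl | hij
        · simp only [if_pos rfl]
          have hk' : (0 : ℝ) ≤ (k : ℝ) := by exact_mod_cast hk0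
          push_cast
          linarith [Int.floor_le (x i)]
        · simp only [if_neg hij, sub_zero]
          exact Int.floor_le (x i)
      · intro hξ
        have hij : i ≠ j := by rintro rfl; exact hj2 hξ
        show x i = ((⌊x i⌋ - if i = j then k else 0 : ℤ) : ℝ)
        obtain ⟨z, hz⟩ := (h1 i).2 hξ
        simp only [if_neg hij, sub_zero, hz, Int.floor_intCast]
end

section
/- Let W be a window with −W = {a₀, a₀+1, …, b₀} and assume |W| ≥ η₋. Then the window skeleton and the negative cylindrical GIT-quotient skeleton agree over the region where μ is below a₀: {(x,ξ) ∈ Λ̃_W : μ(x) < a₀} = {(x,ξ) ∈ Λ_N⁻ : μ(x) < a₀}. -/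
open Finset

/-- Theorem (thm:slice, part 2): if `|W| ≥ η₋`, the window skeleton `Λ̃_W` agrees with the
negative cylindrical GIT-quotient skeleton `Λ_N⁻` over the region `μ(x) < a₀`. -/
theorem window_skeleton_eq_negative_skeleton_below
    (N : ℕ) (hN : 1 ≤ N) (a : Fin N → ℤ) (ha : ∀ i, a i ≠ 0)
    (hpos : ∃ i, 0 < a i) (hneg : ∃ i, a i < 0)
    (a₀ b₀ : ℤ) (hab : a₀ ≤ b₀)
    (hW : (∑ i ∈ univ.filter fun i => a i < 0, (-a i)) ≤ b₀ - a₀ + 1) :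
    {p : (Fin N → ℝ) × (Fin N → ℝ) |
        (∃ v : Fin N → ℤ,
            (a₀ ≤ ∑ i, a i * v i ∧ ∑ i, a i * v i ≤ b₀) ∧
            ∀ i, (v i : ℝ) ≤ p.1 i ∧ p.2 i ≤ 0 ∧ (p.2 i < 0 → p.1 i = (v i : ℝ))) ∧
        ∑ i, (a i : ℝ) * p.1 i < (a₀ : ℝ)} =
    {p : (Fin N → ℝ) × (Fin N → ℝ) |
        ((∀ i, p.2 i ≤ 0 ∧ (p.2 i < 0 → ∃ z : ℤ, p.1 i = (z : ℝ))) ∧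
          ¬ ({i | a i < 0} ⊆ {i | p.2 i < 0})) ∧
        ∑ i, (a i : ℝ) * p.1 i < (a₀ : ℝ)} := by
  ext p
  simp only [Set.mem_setOf_eq]
  constructor
  · rintro ⟨⟨v, ⟨hv1, _hv2⟩, hvp⟩, hμ⟩
    refine ⟨⟨fun i => ⟨(hvp i).2.1, fun h => ⟨v i, (hvp i).2.2 h⟩⟩, ?_⟩, hμ⟩
    intro hsub
    have key : ∀ i ∈ univ, (a i : ℝ) * (v i : ℝ) ≤ (a i : ℝ) * p.1 i := by
      intro i _
      rcases lt_or_gt_of_ne (ha i) with h | h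
      · have hx : p.1 i = (v i : ℝ) := (hvp i).2.2 (hsub h)
        rw [hx]
      · exact mul_le_mul_of_nonneg_left (hvp i).1 (by exact_mod_cast h.le)
    have h1 : (a₀ : ℝ) ≤ ∑ i, (a i : ℝ) * p.1 i := by
      calc (a₀ : ℝ) ≤ ((∑ i, a i * v i : ℤ) : ℝ) := by exact_mod_cast hv1
        _ = ∑ i, (a i : ℝ) * (v i : ℝ) := by push_cast; rfl
        _ ≤ _ := Finset.sum_le_sum key
    linarith
  · rintro ⟨⟨hξ, hnsub⟩, hμ⟩
    rw [Set.not_subset] at hnsub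
    obtain ⟨j, hj, hjξ⟩ := hnsub
    simp only [Set.mem_setOf_eq] at hj hjξ
    set c : ℤ := -a j with hc_def
    have hc : 1 ≤ c := by omega
    set M : ℤ := ∑ i, a i * ⌊p.1 i⌋ with hM_def
    have hcη : c ≤ ∑ i ∈ univ.filter fun i => a i < 0, (-a i) := by
      refine Finset.single_le_sum (f := fun i => -a i) (fun i hi => ?_)
        (Finset.mem_filter.mpr ⟨Finset.mem_univ j, hj⟩)
      have h := (Finset.mem_filter.mp hi).2
      show (0:ℤ) ≤ -a i
      omega
    have hcW : c ≤ b₀ - a₀ + 1 := le_trans hcη hW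
    have hMb : M ≤ b₀ := by
      have hpt : ∀ i ∈ univ, (a i : ℝ) * (⌊p.1 i⌋ : ℝ) ≤
          (a i : ℝ) * p.1 i + (if a i < 0 then ((-a i : ℤ) : ℝ) else 0) := by
        intro i _
        rcases lt_or_gt_of_ne (ha i) with h | h
        · simp only [if_pos h]
          have h1 : (p.1 i) - 1 ≤ (⌊p.1 i⌋ : ℝ) := by
            have := Int.lt_floor_add_one (p.1 i); linarith
          have ha' : (a i : ℝ) < 0 := by exact_mod_cast h
          push_cast
          nlinarith
        · simp only [if_neg (by omega : ¬ a i < 0), add_zero]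
          have ha' : (0:ℝ) ≤ (a i : ℝ) := by exact_mod_cast h.le
          have := Int.floor_le (p.1 i)
          nlinarith
      have hsum : (M : ℝ) ≤ (∑ i, (a i : ℝ) * p.1 i) +
          (∑ i ∈ univ.filter fun i => a i < 0, (-(a i) : ℝ)) := by
        have h2 := Finset.sum_le_sum hpt
        rw [Finset.sum_add_distrib] at h2
        calc (M:ℝ) = ∑ i, (a i : ℝ) * (⌊p.1 i⌋ : ℝ) := by push_cast [hM_def]; rfl
          _ ≤ _ := h2
          _ = _ := by
            congr 1
            rw [Finset.sum_filter]
            push_cast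
            rfl
      have hWr : (∑ i ∈ univ.filter fun i => a i < 0, (-(a i) : ℝ)) ≤
          (b₀ : ℝ) - a₀ + 1 := by exact_mod_cast hW
      have hMr : (M : ℝ) < (b₀ : ℝ) + 1 := by linarith
      have : M < b₀ + 1 := by exact_mod_cast hMr
      omega
    set q : ℤ := (a₀ - M + c - 1) / c with hq_def
    have h1 : c * q + (a₀ - M + c - 1) % c = a₀ - M + c - 1 :=
      Int.mul_ediv_add_emod (a₀ - M + c - 1) c
    have h2 : 0 ≤ (a₀ - M + c - 1) % c := Int.emod_nonneg _ (by omega)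
    have h3 : (a₀ - M + c - 1) % c < c := Int.emod_lt_of_pos _ (by omega)
    have hk1 : a₀ - M ≤ c * q := by linarith
    have hk2 : c * q ≤ a₀ - M + c - 1 := by linarith
    set t : ℤ := max q 0 with ht_def
    have ht0 : 0 ≤ t := le_max_right _ _
    have hsum : ∑ i, a i * (⌊p.1 i⌋ - (if i = j then t else 0)) = M + c * t := by
      have hcg : ∀ i ∈ univ, a i * (⌊p.1 i⌋ - (if i = j then t else 0))
          = a i * ⌊p.1 i⌋ - (if i = j then a j * t else 0) := by
        intro i _
        by_cases h : i = j <;> simp [h, mul_sub]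
      rw [Finset.sum_congr rfl hcg, Finset.sum_sub_distrib,
        Finset.sum_ite_eq' univ j (fun _ => a j * t)]
      simp only [Finset.mem_univ, if_pos, hM_def, hc_def]
      ring
    have hrange : a₀ ≤ M + c * t ∧ M + c * t ≤ b₀ := by
      rcases le_or_gt 0 q with hq | hq
      · have ht : t = q := max_eq_left hq
        rw [ht]
        constructor <;> linarith
      · have htz : t = 0 := max_eq_right hq.le
        have hcq : c * q ≤ c * (-1) :=
          mul_le_mul_of_nonneg_left (by omega) (by omega)
        rw [htz]
        constructor <;> linarith
    refine ⟨⟨fun i => ⌊p.1 i⌋ - (if i = j then t else 0),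
      ⟨by rw [hsum]; exact hrange.1, by rw [hsum]; exact hrange.2⟩, ?_⟩, hμ⟩
    intro i
    refine ⟨?_, (hξ i).1, ?_⟩
    · by_cases h : i = j
      · subst h
        simp only [if_pos rfl]
        push_cast
        have h1 := Int.floor_le (p.1 i)
        have h2 : (0:ℝ) ≤ (t : ℝ) := by exact_mod_cast ht0
        linarith
      · simp only [if_neg h, sub_zero]
        exact Int.floor_le (p.1 i)
    · intro hpi
      by_cases h : i = j
      · exact absurd (h ▸ hpi) hjξ
      · obtain ⟨z, hz⟩ := (hξ i).2 hpi
        simp only [if_neg h, sub_zero, hz, Int.floor_intCast]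
end

section
/- Let W be a window, v ∈ ℤ^N, and I ⊆ [N]. Then the following are equivalent: (i) there exists ε > 0 such that every (x,ξ) ∈ Λ_I(v) with |x − v| < ε belongs to Λ̃_W; (ii) there exists w ∈ ℤ^N(W) with w_i < v_i for all i ∈ I and w_i = v_i for all i ∉ I. -/
open Finset

/-- Proposition (pp:La_I): `Λ_I(v)` appears in the specialization `Λ̃_{W,v}` (i.e. `Λ_I(v)`
lies in `Λ̃_W` near `v`) iff there is a lattice witness `w ∈ ℤ^N(W)` with `w_i < v_i` on `I`
and `w_i = v_i` off `I`. -/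
theorem lambda_I_appears_iff_lattice_witness
    (N : ℕ) (hN : 1 ≤ N) (a : Fin N → ℤ) (ha : ∀ i, a i ≠ 0)
    (hpos : ∃ i, 0 < a i) (hneg : ∃ i, a i < 0)
    (a₀ b₀ : ℤ) (hab : a₀ ≤ b₀)
    (v : Fin N → ℤ) (I : Set (Fin N)) :
    (∃ ε : ℝ, 0 < ε ∧
      ∀ p : (Fin N → ℝ) × (Fin N → ℝ),
        ((∀ i ∈ I, p.2 i = 0) ∧
          ∀ i ∉ I, (v i : ℝ) ≤ p.1 i ∧ p.2 i ≤ 0 ∧ (p.2 i < 0 → p.1 i = (v i : ℝ))) →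
        dist p.1 (fun i => (v i : ℝ)) < ε →
        ∃ w : Fin N → ℤ,
          (a₀ ≤ ∑ i, a i * w i ∧ ∑ i, a i * w i ≤ b₀) ∧
          ∀ i, (w i : ℝ) ≤ p.1 i ∧ p.2 i ≤ 0 ∧ (p.2 i < 0 → p.1 i = (w i : ℝ))) ↔
    (∃ w : Fin N → ℤ,
      (a₀ ≤ ∑ i, a i * w i ∧ ∑ i, a i * w i ≤ b₀) ∧
      (∀ i ∈ I, w i < v i) ∧ (∀ i ∉ I, w i = v i)) := by
  classical
  constructor
  · rintro ⟨ε, hε, h⟩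
    set δ : ℝ := min 1 ε / 2 with hδdef
    have hδpos : 0 < δ := half_pos (lt_min one_pos hε)
    have hδε : δ < ε := lt_of_le_of_lt
      (div_le_div_of_nonneg_right (min_le_right 1 ε) two_pos.le) (half_lt_self hε)
    set p : (Fin N → ℝ) × (Fin N → ℝ) :=
      (fun i => if i ∈ I then (v i : ℝ) - δ else (v i : ℝ),
       fun i => if i ∈ I then 0 else -1) with hp
    have hmem : (∀ i ∈ I, p.2 i = 0) ∧
        ∀ i ∉ I, (v i : ℝ) ≤ p.1 i ∧ p.2 i ≤ 0 ∧ (p.2 i < 0 → p.1 i = (v i : ℝ)) := by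
      constructor
      · intro i hi; simp [hp, hi]
      · intro i hi
        refine ⟨by simp [hp, hi], by simp [hp, hi], fun _ => by simp [hp, hi]⟩
    have hdist : dist p.1 (fun i => (v i : ℝ)) < ε := by
      rw [dist_pi_lt_iff hε]
      intro i
      by_cases hi : i ∈ I
      · simp only [hp, hi, if_pos]
        rw [Real.dist_eq]
        have : (v i : ℝ) - δ - (v i : ℝ) = -δ := by ring
        rw [this, abs_neg, abs_of_nonneg hδpos.le]
        exact hδε
      · simp only [hp, hi, if_neg, not_false_iff]
        simpa using hε
    obtain ⟨w, hW, hw⟩ := h p hmem hdist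
    refine ⟨w, hW, ?_, ?_⟩
    · intro i hi
      have h1 := (hw i).1
      simp only [hp, hi, if_pos] at h1
      have : (w i : ℝ) < (v i : ℝ) := lt_of_le_of_lt h1 (by linarith)
      exact_mod_cast this
    · intro i hi
      have h2 := (hw i).2.2 (by simp [hp, hi])
      simp only [hp, hi, if_neg, not_false_iff] at h2
      exact_mod_cast h2.symm
  · rintro ⟨w, hW, hI, hnI⟩
    refine ⟨1, one_pos, ?_⟩
    rintro p ⟨h1, h2⟩ hd
    refine ⟨w, hW, fun i => ?_⟩
    by_cases hi : i ∈ I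
    · have hz := h1 i hi
      have hdi : dist (p.1 i) ((v i : ℝ)) < 1 :=
        lt_of_le_of_lt (dist_le_pi_dist p.1 (fun i => (v i : ℝ)) i) hd
      have hwi : (w i : ℤ) + 1 ≤ v i := hI i hi
      have hwr : (w i : ℝ) + 1 ≤ (v i : ℝ) := by exact_mod_cast hwi
      have : (v i : ℝ) - p.1 i < 1 := by
        have := abs_lt.mp (by rwa [Real.dist_eq] at hdi)
        linarith [this.1]
      refine ⟨by linarith, le_of_eq hz, fun hlt => absurd hz (ne_of_lt hlt)⟩
    · have := h2 i hi
      have hwv : (w i : ℝ) = (v i : ℝ) := by exact_mod_cast hnI i hi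
      exact ⟨hwv ▸ this.1, this.2.1, fun hlt => by rw [this.2.2 hlt, hwv]⟩
end

section
/- Let W be a window, v ∈ ℤ^N(W), and I ⊆ [N]. If I = ∅ or I is of mixed-type, then Λ_I appears in the specialization of Λ̃_W at v; that is, there exists w ∈ ℤ^N with μ(w) ∈ −W, w_i < v_i for all i ∈ I, and w_i = v_i for all i ∉ I. -/
open Finset

/-- Lemma (lm:mix): for `v ∈ ℤ^N(W)`, if `I = ∅` or `I` is of mixed type, then `Λ_I` appears
in the specialization of `Λ̃_W` at `v`. -/
theorem lambda_I_appears_of_empty_or_mixed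
    (N : ℕ) (hN : 1 ≤ N) (a : Fin N → ℤ) (ha : ∀ i, a i ≠ 0)
    (hpos : ∃ i, 0 < a i) (hneg : ∃ i, a i < 0)
    (a₀ b₀ : ℤ) (hab : a₀ ≤ b₀)
    (v : Fin N → ℤ) (hv : a₀ ≤ ∑ i, a i * v i ∧ ∑ i, a i * v i ≤ b₀)
    (I : Set (Fin N))
    (hI : I = ∅ ∨ ((∃ i ∈ I, 0 < a i) ∧ (∃ j ∈ I, a j < 0))) :
    ∃ w : Fin N → ℤ,
      (a₀ ≤ ∑ i, a i * w i ∧ ∑ i, a i * w i ≤ b₀) ∧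
      (∀ i ∈ I, w i < v i) ∧ (∀ i ∉ I, w i = v i) := by
  classical
  rcases hI with hI | ⟨⟨i0, hi0I, hi0⟩, ⟨j0, hj0I, hj0⟩⟩
  · exact ⟨v, hv, by simp [hI], fun _ _ => rfl⟩
  · set s : Finset (Fin N) := Finset.univ.filter (· ∈ I) with hs
    set sp := s.filter (fun k => 0 < a k) with hsp
    set sn := s.filter (fun k => ¬ 0 < a k) with hsn
    set P := ∑ k ∈ sp, a k with hP
    set Q := ∑ k ∈ sn, (-a k) with hQ
    have hs_mem : ∀ k, k ∈ s ↔ k ∈ I := by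
      intro k; simp [hs]
    have hPpos : 0 < P := by
      apply Finset.sum_pos'
      · intro k hk
        exact le_of_lt (Finset.mem_filter.mp hk).2
      · exact ⟨i0, Finset.mem_filter.mpr ⟨(hs_mem i0).mpr hi0I, hi0⟩, hi0⟩
    have hQpos : 0 < Q := by
      apply Finset.sum_pos'
      · intro k hk
        have := (Finset.mem_filter.mp hk).2
        omega
      · refine ⟨j0, Finset.mem_filter.mpr ⟨(hs_mem j0).mpr hj0I, by omega⟩, by omega⟩
    set w : Fin N → ℤ := fun k =>
      if k ∈ I then (if 0 < a k then v k - Q else v k - P) else v k with hw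
    have hsum : ∑ i, a i * w i = ∑ i, a i * v i := by
      have hdiff : ∑ i, a i * (v i - w i) = 0 := by
        have h1 : ∑ i ∈ s, a i * (v i - w i) = ∑ i, a i * (v i - w i) := by
          apply Finset.sum_subset s.subset_univ
          intro i _ hi
          have : i ∉ I := fun h => hi ((hs_mem i).mpr h)
          simp [hw, this]
        have h2 : ∑ i ∈ sp, a i * (v i - w i) = P * Q := by
          rw [hP, Finset.sum_mul]
          apply Finset.sum_congr rfl
          intro i hi
          obtain ⟨his, hia⟩ := Finset.mem_filter.mp hi
          have hiI : i ∈ I := (hs_mem i).mp his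
          simp [hw, hiI, hia]
        have h3 : ∑ i ∈ sn, a i * (v i - w i) = (-Q) * P := by
          have : ∑ i ∈ sn, a i * (v i - w i) = ∑ i ∈ sn, (-a i) * (-P) := by
            apply Finset.sum_congr rfl
            intro i hi
            obtain ⟨his, hia⟩ := Finset.mem_filter.mp hi
            have hiI : i ∈ I := (hs_mem i).mp his
            simp [hw, hiI, hia]
          rw [this, ← Finset.sum_mul, ← hQ]; ring
        have h4 : ∑ i ∈ s, a i * (v i - w i) = P * Q + (-Q) * P := by
          rw [← h2, ← h3, hsp, hsn]
          exact (Finset.sum_filter_add_sum_filter_not s _ _).symm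
        rw [← h1, h4]; ring
      have : ∑ i, a i * (v i - w i) = ∑ i, a i * v i - ∑ i, a i * w i := by
        rw [← Finset.sum_sub_distrib]
        apply Finset.sum_congr rfl
        intro i _; ring
      omega
    refine ⟨w, by rw [hsum]; exact hv, ?_, ?_⟩
    · intro i hiI
      by_cases hia : 0 < a i <;> simp [hw, hiI, hia] <;> omega
    · intro i hiI
      simp [hw, hiI]
end

section
/- Let W be a window, v ∈ ℤ^N(W), and let I ⊆ [N] be nonempty with either I ⊆ [N]₊ or I ⊆ [N]₋. Then Λ_I appears in the specialization of Λ̃_W at v if and only if μ(v) − ∑_{i∈I} a_i ∈ −W. -/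
/-!
Writing `d = v - w`, which vanishes off `I` and is at least `1` on `I`, gives
`μ(w) = μ(v) - ∑_{i∈I} a_i d_i`. When the `a_i` with `i ∈ I` share a sign, `∑_{i∈I} a_i` lies
between `0` and `∑_{i∈I} a_i d_i`, so `μ(v) - ∑_{i∈I} a_i` lies between `μ(v)` and `μ(w)`, hence
in the window whenever both are. Conversely `w = v - 𝟙_I` has `μ(w) = μ(v) - ∑_{i∈I} a_i`.
-/

open scoped Interval

theorem sum_mul_eq_sub_sum_mul_sub_of_eq_compl {ι R : Type*} [Fintype ι] [CommRing R]
    (a v w : ι → R) {I : Finset ι} (hw : ∀ i ∉ I, w i = v i) :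
    ∑ i, a i * w i = ∑ i, a i * v i - ∑ i ∈ I, a i * (v i - w i) := by
  rw [Finset.sum_subset (Finset.subset_univ I) fun i _ hi => by rw [hw i hi, sub_self, mul_zero],
    ← Finset.sum_sub_distrib]
  exact Finset.sum_congr rfl fun i _ => by ring

theorem sum_mem_uIcc_zero_sum_mul {ι R : Type*} [CommRing R] [LinearOrder R]
    [IsStrictOrderedRing R] {a d : ι → R} {I : Finset ι}
    (ha : (∀ i ∈ I, 0 ≤ a i) ∨ ∀ i ∈ I, a i ≤ 0) (hd : ∀ i ∈ I, 1 ≤ d i) :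
    ∑ i ∈ I, a i ∈ [[0, ∑ i ∈ I, a i * d i]] := by
  rcases ha with ha | ha
  · exact Set.Icc_subset_uIcc ⟨Finset.sum_nonneg ha,
      Finset.sum_le_sum fun i hi => le_mul_of_one_le_right (ha i hi) (hd i hi)⟩
  · exact Set.Icc_subset_uIcc' ⟨Finset.sum_le_sum fun i hi => mul_le_of_one_le_right (ha i hi) (hd i hi),
      Finset.sum_nonpos ha⟩

theorem sub_mem_uIcc_of_mem_uIcc_zero {R : Type*} [AddCommGroup R] [LinearOrder R]
    [IsOrderedAddMonoid R] {m t s : R} (h : t ∈ [[0, s]]) : m - t ∈ [[m, m - s]] := by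
  simpa using Set.mem_image_of_mem (fun x => m - x) h

theorem lambda_I_appears_iff_shift_in_window_general
    (N : ℕ) (a : Fin N → ℤ)
    (a₀ b₀ : ℤ)
    (v : Fin N → ℤ) (hv : a₀ ≤ ∑ i, a i * v i ∧ ∑ i, a i * v i ≤ b₀)
    (I : Finset (Fin N))
    (hI : (∀ i ∈ I, 0 < a i) ∨ (∀ i ∈ I, a i < 0)) :
    (∃ w : Fin N → ℤ,
      (a₀ ≤ ∑ i, a i * w i ∧ ∑ i, a i * w i ≤ b₀) ∧
      (∀ i ∈ I, w i < v i) ∧ (∀ i ∉ I, w i = v i)) ↔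
    (a₀ ≤ (∑ i, a i * v i) - ∑ i ∈ I, a i ∧ (∑ i, a i * v i) - ∑ i ∈ I, a i ≤ b₀) := by
  constructor
  · rintro ⟨w, hw, hlt, heq⟩
    rw [sum_mul_eq_sub_sum_mul_sub_of_eq_compl a v w heq] at hw
    have hshift : ∑ i ∈ I, a i ∈ [[0, ∑ i ∈ I, a i * (v i - w i)]] :=
      sum_mem_uIcc_zero_sum_mul (hI.imp (fun h i hi => (h i hi).le) fun h i hi => (h i hi).le)
        fun i hi => by linarith [hlt i hi]
    exact Set.uIcc_subset_Icc hv hw (sub_mem_uIcc_of_mem_uIcc_zero hshift)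
  · intro hshift
    refine ⟨fun i => if i ∈ I then v i - 1 else v i, ?_, fun i hi => by simp [hi],
      fun i hi => if_neg hi⟩
    rw [sum_mul_eq_sub_sum_mul_sub_of_eq_compl a v _ fun i hi => if_neg hi]
    convert hshift using 3 <;>
      exact Finset.sum_congr rfl fun i hi => by simp [hi]

/-- Lemma (lm:mix2): for `v ∈ ℤ^N(W)` and a nonempty `I` of positive or negative type,
`Λ_I` appears in the specialization of `Λ̃_W` at `v` iff `μ(v) − ∑_{i∈I} a_i ∈ −W`. -/
theorem lambda_I_appears_iff_shift_in_window
    (N : ℕ) (hN : 1 ≤ N) (a : Fin N → ℤ) (ha : ∀ i, a i ≠ 0)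
    (hpos : ∃ i, 0 < a i) (hneg : ∃ i, a i < 0)
    (a₀ b₀ : ℤ) (hab : a₀ ≤ b₀)
    (v : Fin N → ℤ) (hv : a₀ ≤ ∑ i, a i * v i ∧ ∑ i, a i * v i ≤ b₀)
    (I : Finset (Fin N)) (hne : I.Nonempty)
    (hI : (∀ i ∈ I, 0 < a i) ∨ (∀ i ∈ I, a i < 0)) :
    (∃ w : Fin N → ℤ,
      (a₀ ≤ ∑ i, a i * w i ∧ ∑ i, a i * w i ≤ b₀) ∧
      (∀ i ∈ I, w i < v i) ∧ (∀ i ∉ I, w i = v i)) ↔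
    (a₀ ≤ (∑ i, a i * v i) - ∑ i ∈ I, a i ∧ (∑ i, a i * v i) - ∑ i ∈ I, a i ≤ b₀) :=
  lambda_I_appears_iff_shift_in_window_general N a a₀ b₀ v hv I hI
end

section
/- Let W be a window with |W| ≥ η₊ and let v ∈ ℤ^N with μ(v) > max(−W) = b₀. Then for any I ⊆ [N], Λ_I appears in the specialization of Λ̃_W at v if and only if I is of mixed-type, or I is nonempty and of positive-type (I ⊆ [N]₊). -/
open Finset

/-- Lemma (lm:leftright, part 1): if `|W| ≥ η₊` and `μ(v) > max(−W) = b₀`, then `Λ_I` appears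
in the specialization of `Λ̃_W` at `v` iff `I` is of mixed type or `I` is nonempty of
positive type. -/
theorem lambda_I_appears_right_of_window
    (N : ℕ) (hN : 1 ≤ N) (a : Fin N → ℤ) (ha : ∀ i, a i ≠ 0)
    (hpos : ∃ i, 0 < a i) (hneg : ∃ i, a i < 0)
    (a₀ b₀ : ℤ) (hab : a₀ ≤ b₀)
    (hW : (∑ i ∈ univ.filter fun i => 0 < a i, a i) ≤ b₀ - a₀ + 1)
    (v : Fin N → ℤ) (hv : b₀ < ∑ i, a i * v i)
    (I : Set (Fin N)) :
    (∃ w : Fin N → ℤ,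
      (a₀ ≤ ∑ i, a i * w i ∧ ∑ i, a i * w i ≤ b₀) ∧
      (∀ i ∈ I, w i < v i) ∧ (∀ i ∉ I, w i = v i)) ↔
    (((∃ i ∈ I, 0 < a i) ∧ (∃ j ∈ I, a j < 0)) ∨
      (I.Nonempty ∧ ∀ i ∈ I, 0 < a i)) := by
  classical
  constructor
  · rintro ⟨w, ⟨hwa, hwb⟩, hlt, heq⟩
    have hIne : I.Nonempty := by
      by_contra h
      rw [Set.not_nonempty_iff_eq_empty] at h
      subst h
      have hwv : (∑ i, a i * w i) = ∑ i, a i * v i := by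
        apply Finset.sum_congr rfl
        intro i _
        rw [heq i (by simp)]
      omega
    have hex : ∃ i ∈ I, 0 < a i := by
      by_contra h
      push_neg at h
      have hall : ∀ i ∈ I, a i < 0 := fun i hi => lt_of_le_of_ne (h i hi) (ha i)
      have hle : (∑ i, a i * v i) ≤ ∑ i, a i * w i := by
        apply Finset.sum_le_sum
        intro i _
        by_cases hi : i ∈ I
        · nlinarith [hall i hi, hlt i hi]
        · rw [heq i hi]
      omega
    by_cases hneg' : ∃ j ∈ I, a j < 0
    · exact Or.inl ⟨hex, hneg'⟩
    · push_neg at hneg'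
      exact Or.inr ⟨hIne, fun i hi => lt_of_le_of_ne (hneg' i hi) (Ne.symm (ha i))⟩
  · intro h
    have hex : ∃ i ∈ I, 0 < a i := by
      rcases h with ⟨hp, _⟩ | ⟨⟨i, hi⟩, hall⟩
      · exact hp
      · exact ⟨i, hi, hall i hi⟩
    set S : ℤ := ∑ i ∈ univ.filter (fun i => i ∈ I ∧ 0 < a i), a i with hS
    set T : ℤ := ∑ i ∈ univ.filter (fun i => i ∈ I ∧ a i < 0), a i with hT
    have hSpos : 0 < S := by
      apply Finset.sum_pos
      · intro i hi
        simp only [Finset.mem_filter] at hi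
        exact hi.2.2
      · obtain ⟨i, hi, hai⟩ := hex
        exact ⟨i, by simp [hi, hai]⟩
    have hSle : S ≤ b₀ - a₀ + 1 := by
      refine le_trans ?_ hW
      apply Finset.sum_le_sum_of_subset_of_nonneg
      · intro i hi
        simp only [Finset.mem_filter] at hi ⊢
        exact ⟨hi.1, hi.2.2⟩
      · intro i hi _
        simp only [Finset.mem_filter] at hi
        exact le_of_lt hi.2
    have hTnonpos : T ≤ 0 := by
      apply Finset.sum_nonpos
      intro i hi
      simp only [Finset.mem_filter] at hi
      exact le_of_lt hi.2.2
    set m : ℤ := (∑ i, a i * v i) - T with hm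
    have hmb : b₀ < m := by omega
    set q : ℤ := (m - b₀ - 1) / S with hq
    set d : ℤ := q + 1 with hd
    have hd1 : 1 ≤ d := by
      have : 0 ≤ q := Int.ediv_nonneg (by omega) (le_of_lt hSpos)
      omega
    have hdiv := Int.mul_ediv_add_emod (m - b₀ - 1) S
    rw [← hq] at hdiv
    have hmod0 := Int.emod_nonneg (m - b₀ - 1) (ne_of_gt hSpos)
    have hmod1 := Int.emod_lt_of_pos (m - b₀ - 1) hSpos
    have hds : d * S = S * q + S := by rw [hd]; ring
    have hub : m - d * S ≤ b₀ := by omega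
    have hlb : a₀ ≤ m - d * S := by omega
    refine ⟨fun i => if i ∈ I then (if 0 < a i then v i - d else v i - 1) else v i,
      ⟨?_, ?_⟩, ?_, ?_⟩
    · have hsum : (∑ i, a i * (if i ∈ I then (if 0 < a i then v i - d else v i - 1) else v i))
          = m - d * S := by
        have hpt : ∀ i, a i * (if i ∈ I then (if 0 < a i then v i - d else v i - 1) else v i)
            = a i * v i - (if i ∈ I ∧ 0 < a i then a i * d else 0)
              - (if i ∈ I ∧ a i < 0 then a i else 0) := by
          intro i
          rcases lt_or_gt_of_ne (ha i) with hai | hai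
          · by_cases hi : i ∈ I <;>
              simp [hi, hai, not_lt_of_gt hai, asymm hai] <;> ring
          · by_cases hi : i ∈ I <;>
              simp [hi, hai, asymm hai] <;> ring
        rw [Finset.sum_congr rfl (fun i _ => hpt i)]
        rw [Finset.sum_sub_distrib, Finset.sum_sub_distrib]
        rw [← Finset.sum_filter, ← Finset.sum_filter]
        rw [← Finset.sum_mul]
        rw [hm, hS, hT]
        ring
      rw [hsum]; exact hlb
    · have hsum : (∑ i, a i * (if i ∈ I then (if 0 < a i then v i - d else v i - 1) else v i))
          = m - d * S := by
        have hpt : ∀ i, a i * (if i ∈ I then (if 0 < a i then v i - d else v i - 1) else v i)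
            = a i * v i - (if i ∈ I ∧ 0 < a i then a i * d else 0)
              - (if i ∈ I ∧ a i < 0 then a i else 0) := by
          intro i
          rcases lt_or_gt_of_ne (ha i) with hai | hai
          · by_cases hi : i ∈ I <;>
              simp [hi, hai, not_lt_of_gt hai, asymm hai] <;> ring
          · by_cases hi : i ∈ I <;>
              simp [hi, hai, asymm hai] <;> ring
        rw [Finset.sum_congr rfl (fun i _ => hpt i)]
        rw [Finset.sum_sub_distrib, Finset.sum_sub_distrib]
        rw [← Finset.sum_filter, ← Finset.sum_filter]
        rw [← Finset.sum_mul]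
        rw [hm, hS, hT]
        ring
      rw [hsum]; exact hub
    · intro i hi
      simp only [hi, if_true]
      split <;> omega
    · intro i hi
      simp only [hi, if_false]
end

section
/- Let W be a window with |W| ≥ η₋ and let v ∈ ℤ^N with μ(v) < min(−W) = a₀. Then for any I ⊆ [N], Λ_I appears in the specialization of Λ̃_W at v if and only if I is of mixed-type, or I is nonempty and of negative-type (I ⊆ [N]₋). -/
open Finset

/-- Lemma (lm:leftright, part 2): if `|W| ≥ η₋` and `μ(v) < min(−W) = a₀`, then `Λ_I` appears
in the specialization of `Λ̃_W` at `v` iff `I` is of mixed type or `I` is nonempty of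
negative type. -/
theorem lambda_I_appears_left_of_window
    (N : ℕ) (hN : 1 ≤ N) (a : Fin N → ℤ) (ha : ∀ i, a i ≠ 0)
    (hpos : ∃ i, 0 < a i) (hneg : ∃ i, a i < 0)
    (a₀ b₀ : ℤ) (hab : a₀ ≤ b₀)
    (hW : (∑ i ∈ univ.filter fun i => a i < 0, (-a i)) ≤ b₀ - a₀ + 1)
    (v : Fin N → ℤ) (hv : ∑ i, a i * v i < a₀)
    (I : Set (Fin N)) :
    (∃ w : Fin N → ℤ,
      (a₀ ≤ ∑ i, a i * w i ∧ ∑ i, a i * w i ≤ b₀) ∧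
      (∀ i ∈ I, w i < v i) ∧ (∀ i ∉ I, w i = v i)) ↔
    (((∃ i ∈ I, 0 < a i) ∧ (∃ j ∈ I, a j < 0)) ∨
      (I.Nonempty ∧ ∀ i ∈ I, a i < 0)) := by
  classical
  constructor
  · rintro ⟨w, ⟨hwa, hwb⟩, hlt, heq⟩
    by_cases hIneg : ∃ j ∈ I, a j < 0
    · by_cases hIpos : ∃ i ∈ I, 0 < a i
      · exact Or.inl ⟨hIpos, hIneg⟩
      · obtain ⟨j, hjI, hj⟩ := hIneg
        push_neg at hIpos
        exact Or.inr ⟨⟨j, hjI⟩, fun i hi => lt_of_le_of_ne (hIpos i hi) (ha i)⟩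
    · exfalso
      push_neg at hIneg
      have hle : ∑ i, a i * w i ≤ ∑ i, a i * v i := by
        apply Finset.sum_le_sum
        intro i _
        by_cases hi : i ∈ I
        · exact mul_le_mul_of_nonneg_left (le_of_lt (hlt i hi)) (hIneg i hi)
        · rw [heq i hi]
      linarith
  · intro h
    obtain ⟨j, hjI, hja⟩ : ∃ j ∈ I, a j < 0 := by
      rcases h with ⟨_, hj⟩ | ⟨⟨j, hjI⟩, hneg'⟩
      · exact hj
      · exact ⟨j, hjI, hneg' j hjI⟩
    set η : ℤ := ∑ i ∈ univ.filter fun i => a i < 0, (-a i) with hηdef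
    set c : ℤ := -a j with hcdef
    have hc : 0 < c := by omega
    set S : ℤ := ∑ i, (if i ∈ I then -a i else 0) with hSdef
    have hSη : S ≤ η := by
      rw [hSdef, hηdef, Finset.sum_filter]
      apply Finset.sum_le_sum
      intro i _
      by_cases h1 : i ∈ I <;> by_cases h2 : a i < 0 <;> simp [h1, h2] <;> omega
    have hcη : c ≤ η := by
      rw [hηdef]
      exact Finset.single_le_sum (f := fun i => -a i)
        (fun i hi => by simp only [Finset.mem_filter] at hi; simp only [neg_nonneg]; omega)
        (by simp [Finset.mem_filter, hja])
    set T : ℤ := a₀ - (∑ i, a i * v i) - S with hTdef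
    set d : ℤ := (T + c - 1) / c with hddef
    set k : ℤ := max 0 d with hkdef
    have hk0 : 0 ≤ k := le_max_left _ _
    have hdiv := Int.mul_ediv_add_emod (T + c - 1) c
    have hr1 := Int.emod_nonneg (T + c - 1) (by omega : c ≠ 0)
    have hr2 := Int.emod_lt_of_pos (T + c - 1) hc
    -- μ(v) + S ≤ b₀
    have hb : (∑ i, a i * v i) + S ≤ b₀ := by linarith
    have hkT : T ≤ c * k := by
      by_cases hT : T ≤ 0
      · nlinarith
      · have hd0 : 0 ≤ d := Int.ediv_nonneg (by omega) (le_of_lt hc)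
        have hkd : k = d := max_eq_right hd0
        rw [hkd]
        linarith
    have hkU : c * k ≤ T + (b₀ - a₀) := by
      by_cases hT : T ≤ 0
      · have hcd : c * d ≤ T + c - 1 := by linarith
        have hd1 : d < 1 := by
          have : c * d < c * 1 := by linarith
          exact lt_of_mul_lt_mul_left this (le_of_lt hc)
        have hkd : k = 0 := max_eq_left (by omega)
        rw [hkd]
        simp only [mul_zero]
        linarith
      · have hd0 : 0 ≤ d := Int.ediv_nonneg (by omega) (le_of_lt hc)
        have hkd : k = d := max_eq_right hd0
        rw [hkd]
        linarith
    refine ⟨fun i => if i ∈ I then (if i = j then v i - 1 - k else v i - 1) else v i,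
      ?_, ?_, ?_⟩
    · have hμw : ∑ i, a i * (if i ∈ I then (if i = j then v i - 1 - k else v i - 1) else v i)
          = (∑ i, a i * v i) + S + c * k := by
        have h1 : ∀ i, a i * (if i ∈ I then (if i = j then v i - 1 - k else v i - 1) else v i)
            = a i * v i + (if i ∈ I then -a i else 0) + (if i = j then c * k else 0) := by
          intro i
          by_cases hiI : i ∈ I
          · by_cases hij : i = j
            · subst hij; simp only [if_pos hiI, if_pos rfl, ite_true, hcdef]; ring
            · simp only [if_pos hiI, if_neg hij]; ring
          · have hij : i ≠ j := fun h => hiI (h ▸ hjI)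
            simp only [if_neg hiI, if_neg hij]; ring
        simp only [h1, Finset.sum_add_distrib]
        rw [Finset.sum_ite_eq' univ j fun _ => c * k]
        simp [hSdef]
      rw [hμw]
      constructor <;> linarith
    · intro i hi
      by_cases hij : i = j
      · subst hij; simp only [if_pos hi, if_pos rfl]; omega
      · simp only [if_pos hi, if_neg hij]; omega
    · intro i hi
      simp only [if_neg hi]
end

section
/- Let W be a window and v ∈ ℤ^N, and assume W is thick enough for v, meaning: μ(v) ∈ −W, or (μ(v) > b₀ and |W| ≥ η₊), or (μ(v) < a₀ and |W| ≥ η₋). Let I ⊆ [N] and assume Λ_I does not appear in the specialization of Λ̃_W at v. Then exactly one of the following holds: (1) I ⊆ [N]₊ and for every nonempty K ⊆ [N]₋, Λ_{I∪K} appears in the specialization of Λ̃_W at v; (2) I ⊆ [N]₋ and for every nonempty K ⊆ [N]₊, Λ_{I∪K} appears in the specialization of Λ̃_W at v. -/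
open Finset


private lemma hit (p L U B : ℤ) (hp : 0 < p) (hw : p ≤ U - L + 1) (hB : B ≤ U) :
    ∃ m : ℤ, 0 ≤ m ∧ L ≤ B + m * p ∧ B + m * p ≤ U := by
  rcases le_or_gt L B with h | h
  · exact ⟨0, le_refl _, by omega, by omega⟩
  · set n := L - B + p - 1 with hn
    have hn0 : 0 ≤ n := by omega
    have key := Int.mul_ediv_add_emod n p
    have h2 := Int.emod_nonneg n (by omega : p ≠ 0)
    have h3 := Int.emod_lt_of_pos n hp
    have hcomm : n / p * p = p * (n / p) := mul_comm _ _
    exact ⟨n / p, Int.ediv_nonneg hn0 (le_of_lt hp), by omega, by omega⟩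

private lemma sum_witness {N : ℕ} (a v t : Fin N → ℤ) (a₀ b₀ : ℤ) (J : Set (Fin N))
    (h1 : ∀ i ∈ J, 1 ≤ t i) (h0 : ∀ i ∉ J, t i = 0)
    (hL : a₀ ≤ (∑ i, a i * v i) - ∑ i, a i * t i)
    (hU : (∑ i, a i * v i) - (∑ i, a i * t i) ≤ b₀) :
    ∃ w : Fin N → ℤ,
      (a₀ ≤ ∑ i, a i * w i ∧ ∑ i, a i * w i ≤ b₀) ∧
      (∀ i ∈ J, w i < v i) ∧ (∀ i ∉ J, w i = v i) := by
  have key : ∑ i, a i * (v i - t i) = (∑ i, a i * v i) - ∑ i, a i * t i := by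
    rw [← Finset.sum_sub_distrib]
    exact Finset.sum_congr rfl fun i _ => by ring
  refine ⟨fun i => v i - t i, ⟨by rw [key]; exact hL, by rw [key]; exact hU⟩,
    fun i hi => by have := h1 i hi; show v i - t i < v i; omega,
    fun i hi => by have := h0 i hi; show v i - t i = v i; omega⟩


private lemma mixed_t {N : ℕ} (a : Fin N → ℤ) (J : Set (Fin N)) (ip im j : Fin N)
    (hpJ : ip ∈ J) (hnJ : im ∈ J) (hjJ : j ∈ J) (hap : 0 < a ip) (han : a im < 0)
    (ha : ∀ i, a i ≠ 0) (m : ℤ) (hm : 0 ≤ m) :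
    ∃ t : Fin N → ℤ, (∀ i ∈ J, 1 ≤ t i) ∧ (∀ i ∉ J, t i = 0) ∧
      (∑ i, a i * t i) = m * a j := by
  classical
  set P : Finset (Fin N) := univ.filter (fun i => i ∈ J ∧ 0 < a i) with hP
  set M : Finset (Fin N) := univ.filter (fun i => i ∈ J ∧ a i < 0) with hM
  set σP := ∑ i ∈ P, a i with hσPdef
  set σM := ∑ i ∈ M, a i with hσMdef
  have hσP : a ip ≤ σP :=
    Finset.single_le_sum (fun i hi => le_of_lt (Finset.mem_filter.mp hi).2.2)
      (Finset.mem_filter.mpr ⟨mem_univ _, hpJ, hap⟩)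
  have hσM : σM ≤ a im := by
    have h : -a im ≤ ∑ i ∈ M, -a i := by
      refine Finset.single_le_sum (f := fun i => -a i) ?_ ?_
      · intro i hi
        rw [hM, Finset.mem_filter] at hi
        have : a i < 0 := hi.2.2
        show (0:ℤ) ≤ -a i
        omega
      · rw [hM, Finset.mem_filter]; exact ⟨mem_univ _, hnJ, han⟩
    rw [Finset.sum_neg_distrib, ← hσMdef] at h
    have h2 : -a im ≤ -σM := h
    omega
  set A := (-(a im)) * a ip * (-σM) with hA
  set B := a ip * (-(a im)) * σP with hB
  have hA1 : 1 ≤ A := by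
    have h1 : 1 ≤ -a im := by omega
    have h2 : 1 ≤ a ip := by omega
    have h3 : 1 ≤ -σM := by omega
    rw [hA]
    have h12 : 1 ≤ -a im * a ip := by nlinarith
    nlinarith
  have hB1 : 1 ≤ B := by
    have h1 : 1 ≤ -a im := by omega
    have h2 : 1 ≤ a ip := by omega
    have h3 : 1 ≤ σP := by omega
    rw [hB]
    have h12 : 1 ≤ a ip * -a im := by nlinarith
    nlinarith
  refine ⟨fun i => (if i ∈ J ∧ 0 < a i then A else if i ∈ J ∧ a i < 0 then B else 0)
      + (if i = j then m else 0), ?_, ?_, ?_⟩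
  · intro i hi
    show 1 ≤ (if i ∈ J ∧ 0 < a i then A else if i ∈ J ∧ a i < 0 then B else 0)
      + (if i = j then m else 0)
    have := ha i
    by_cases h : 0 < a i
    · rw [if_pos (show i ∈ J ∧ 0 < a i from ⟨hi, h⟩)]
      split <;> omega
    · have hneg : a i < 0 := by omega
      rw [if_neg (fun hc : i ∈ J ∧ 0 < a i => h hc.2),
        if_pos (show i ∈ J ∧ a i < 0 from ⟨hi, hneg⟩)]
      split <;> omega
  · intro i hi
    have hij : i ≠ j := fun h => hi (h ▸ hjJ)
    simp [hi, hij]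
  · have expand : ∀ i, a i * ((if i ∈ J ∧ 0 < a i then A else if i ∈ J ∧ a i < 0 then B else 0)
        + (if i = j then m else 0))
        = (if i ∈ J ∧ 0 < a i then a i * A else 0)
          + (if i ∈ J ∧ a i < 0 then a i * B else 0)
          + (if i = j then a i * m else 0) := by
      intro i
      split_ifs with h1 h2 h3 h4 h5 h6 h7 <;> ring_nf <;> omega
    calc ∑ i, a i * ((if i ∈ J ∧ 0 < a i then A else if i ∈ J ∧ a i < 0 then B else 0)
          + (if i = j then m else 0))
        = ∑ i, ((if i ∈ J ∧ 0 < a i then a i * A else 0)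
          + (if i ∈ J ∧ a i < 0 then a i * B else 0)
          + (if i = j then a i * m else 0)) := Finset.sum_congr rfl fun i _ => expand i
      _ = σP * A + σM * B + a j * m := by
          rw [Finset.sum_add_distrib, Finset.sum_add_distrib]
          congr 1
          · congr 1
            · rw [← Finset.sum_filter, ← hP, ← Finset.sum_mul]
            · rw [← Finset.sum_filter, ← hM, ← Finset.sum_mul]
          · simp [Finset.sum_ite_eq']
      _ = m * a j := by rw [hA, hB]; ring

open Classical in
private lemma pure_t {N : ℕ} (a : Fin N → ℤ) (J : Set (Fin N)) (j : Fin N)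
    (hjJ : j ∈ J) (m : ℤ) (hm : 0 ≤ m) :
    ∃ t : Fin N → ℤ, (∀ i ∈ J, 1 ≤ t i) ∧ (∀ i ∉ J, t i = 0) ∧
      (∑ i, a i * t i) = (∑ i, if i ∈ J then a i else 0) + m * a j := by
  classical
  refine ⟨fun i => (if i ∈ J then 1 else 0) + (if i = j then m else 0), ?_, ?_, ?_⟩
  · intro i hi
    show 1 ≤ (if i ∈ J then 1 else 0) + (if i = j then m else 0)
    rw [if_pos hi]
    split <;> omega
  · intro i hi
    have hij : i ≠ j := fun h => hi (h ▸ hjJ)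
    simp [hi, hij]
  · have expand : ∀ i, a i * ((if i ∈ J then 1 else 0) + (if i = j then m else 0))
        = (if i ∈ J then a i else 0) + (if i = j then a i * m else 0) := by
      intro i; split_ifs <;> ring
    calc ∑ i, a i * ((if i ∈ J then 1 else 0) + (if i = j then m else 0))
        = ∑ i, ((if i ∈ J then a i else 0) + (if i = j then a i * m else 0)) :=
          Finset.sum_congr rfl fun i _ => expand i
      _ = (∑ i, if i ∈ J then a i else 0) + a j * m := by
          rw [Finset.sum_add_distrib]; congr 1; simp [Finset.sum_ite_eq']
      _ = _ := by ring


private lemma noappear_neg {N : ℕ} (a v : Fin N → ℤ) (a₀ b₀ : ℤ) (K : Set (Fin N))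
    (k : Fin N) (hk : k ∈ K) (hKneg : ∀ i ∈ K, a i < 0)
    (hμ : b₀ < ∑ i, a i * v i) :
    ¬ ∃ w : Fin N → ℤ, (a₀ ≤ ∑ i, a i * w i ∧ ∑ i, a i * w i ≤ b₀) ∧
      (∀ i ∈ K, w i < v i) ∧ (∀ i ∉ K, w i = v i) := by
  classical
  rintro ⟨w, ⟨_, hU⟩, hlt, heq⟩
  have key : (∑ i, a i * v i) + 1 ≤ ∑ i, a i * w i := by
    have hb : ∀ i ∈ univ, a i * v i + (if i = k then 1 else 0) ≤ a i * w i := by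
      intro i _
      by_cases hiK : i ∈ K
      · have h1 := hlt i hiK
        have h2 := hKneg i hiK
        by_cases hik : i = k
        · rw [if_pos hik]; nlinarith
        · rw [if_neg hik]; nlinarith
      · rw [heq i hiK, if_neg (fun h : i = k => hiK (h ▸ hk))]; omega
    have hs := Finset.sum_le_sum hb
    rw [Finset.sum_add_distrib, Finset.sum_ite_eq' univ k (fun _ => (1:ℤ))] at hs
    simpa using hs
  omega

private lemma noappear_pos {N : ℕ} (a v : Fin N → ℤ) (a₀ b₀ : ℤ) (K : Set (Fin N))
    (k : Fin N) (hk : k ∈ K) (hKpos : ∀ i ∈ K, 0 < a i)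
    (hμ : (∑ i, a i * v i) < a₀) :
    ¬ ∃ w : Fin N → ℤ, (a₀ ≤ ∑ i, a i * w i ∧ ∑ i, a i * w i ≤ b₀) ∧
      (∀ i ∈ K, w i < v i) ∧ (∀ i ∉ K, w i = v i) := by
  classical
  rintro ⟨w, ⟨hL, _⟩, hlt, heq⟩
  have key : (∑ i, a i * w i) + 1 ≤ ∑ i, a i * v i := by
    have hb : ∀ i ∈ univ, a i * w i + (if i = k then 1 else 0) ≤ a i * v i := by
      intro i _
      by_cases hiK : i ∈ K
      · have h1 := hlt i hiK
        have h2 := hKpos i hiK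
        by_cases hik : i = k
        · rw [if_pos hik]; nlinarith
        · rw [if_neg hik]; nlinarith
      · rw [heq i hiK, if_neg (fun h : i = k => hiK (h ▸ hk))]; omega
    have hs := Finset.sum_le_sum hb
    rw [Finset.sum_add_distrib, Finset.sum_ite_eq' univ k (fun _ => (1:ℤ))] at hs
    simpa using hs
  omega


private lemma appears_mixed {N : ℕ} (a : Fin N → ℤ) (ha : ∀ i, a i ≠ 0)
    (a₀ b₀ : ℤ) (hab : a₀ ≤ b₀) (v : Fin N → ℤ)
    (hthick :
      (a₀ ≤ ∑ i, a i * v i ∧ ∑ i, a i * v i ≤ b₀) ∨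
      (b₀ < ∑ i, a i * v i ∧ (∑ i ∈ univ.filter fun i => 0 < a i, a i) ≤ b₀ - a₀ + 1) ∨
      ((∑ i, a i * v i) < a₀ ∧ (∑ i ∈ univ.filter fun i => a i < 0, (-a i)) ≤ b₀ - a₀ + 1))
    (J : Set (Fin N)) (ip im : Fin N) (hpJ : ip ∈ J) (hnJ : im ∈ J)
    (hap : 0 < a ip) (han : a im < 0) :
    ∃ w : Fin N → ℤ,
      (a₀ ≤ ∑ i, a i * w i ∧ ∑ i, a i * w i ≤ b₀) ∧
      (∀ i ∈ J, w i < v i) ∧ (∀ i ∉ J, w i = v i) := by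
  rcases hthick with ⟨h1, h2⟩ | ⟨h1, h2⟩ | ⟨h1, h2⟩
  · obtain ⟨t, ht1, ht0, hts⟩ := mixed_t a J ip im ip hpJ hnJ hpJ hap han ha 0 le_rfl
    refine sum_witness a v t a₀ b₀ J ht1 ht0 ?_ ?_ <;> rw [hts] <;> linarith
  · have hpη : a ip ≤ ∑ i ∈ univ.filter (fun i => 0 < a i), a i :=
      Finset.single_le_sum (fun i hi => le_of_lt (Finset.mem_filter.mp hi).2)
        (Finset.mem_filter.mpr ⟨mem_univ _, hap⟩)
    obtain ⟨m, hm0, hmL, hmU⟩ := hit (a ip) ((∑ i, a i * v i) - b₀) ((∑ i, a i * v i) - a₀)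
      0 hap (by omega) (by omega)
    obtain ⟨t, ht1, ht0, hts⟩ := mixed_t a J ip im ip hpJ hnJ hpJ hap han ha m hm0
    refine sum_witness a v t a₀ b₀ J ht1 ht0 ?_ ?_ <;> rw [hts] <;> linarith
  · have hnη : -a im ≤ ∑ i ∈ univ.filter (fun i => a i < 0), -a i :=
      Finset.single_le_sum (f := fun i => -a i)
        (fun i hi => by
          have h := (Finset.mem_filter.mp hi).2
          show (0:ℤ) ≤ -a i
          omega)
        (Finset.mem_filter.mpr ⟨mem_univ _, han⟩)
    obtain ⟨m, hm0, hmL, hmU⟩ := hit (-a im) (a₀ - ∑ i, a i * v i) (b₀ - ∑ i, a i * v i)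
      0 (by omega) (by omega) (by omega)
    obtain ⟨t, ht1, ht0, hts⟩ := mixed_t a J ip im im hpJ hnJ hnJ hap han ha m hm0
    refine sum_witness a v t a₀ b₀ J ht1 ht0 ?_ ?_ <;> rw [hts] <;> nlinarith [hmL, hmU]

/-- Proposition (pp:posneg): if `W` is thick enough for `v` and `Λ_I` does not appear in the
specialization of `Λ̃_W` at `v`, then exactly one of the following holds:
(1) `I ⊆ [N]₊` and `Λ_{I∪K}` appears for every nonempty `K ⊆ [N]₋`;
(2) `I ⊆ [N]₋` and `Λ_{I∪K}` appears for every nonempty `K ⊆ [N]₊`. -/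
theorem posneg_dichotomy
    (N : ℕ) (hN : 1 ≤ N) (a : Fin N → ℤ) (ha : ∀ i, a i ≠ 0)
    (hpos : ∃ i, 0 < a i) (hneg : ∃ i, a i < 0)
    (a₀ b₀ : ℤ) (hab : a₀ ≤ b₀)
    (v : Fin N → ℤ)
    (hthick :
      (a₀ ≤ ∑ i, a i * v i ∧ ∑ i, a i * v i ≤ b₀) ∨
      (b₀ < ∑ i, a i * v i ∧ (∑ i ∈ univ.filter fun i => 0 < a i, a i) ≤ b₀ - a₀ + 1) ∨
      ((∑ i, a i * v i) < a₀ ∧ (∑ i ∈ univ.filter fun i => a i < 0, (-a i)) ≤ b₀ - a₀ + 1))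
    (I : Set (Fin N))
    (hnotapp : ¬ ∃ w : Fin N → ℤ,
      (a₀ ≤ ∑ i, a i * w i ∧ ∑ i, a i * w i ≤ b₀) ∧
      (∀ i ∈ I, w i < v i) ∧ (∀ i ∉ I, w i = v i)) :
    Xor'
      (I ⊆ {i | 0 < a i} ∧
        ∀ K : Set (Fin N), K.Nonempty → K ⊆ {i | a i < 0} →
          ∃ w : Fin N → ℤ,
            (a₀ ≤ ∑ i, a i * w i ∧ ∑ i, a i * w i ≤ b₀) ∧
            (∀ i ∈ I ∪ K, w i < v i) ∧ (∀ i ∉ I ∪ K, w i = v i))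
      (I ⊆ {i | a i < 0} ∧
        ∀ K : Set (Fin N), K.Nonempty → K ⊆ {i | 0 < a i} →
          ∃ w : Fin N → ℤ,
            (a₀ ≤ ∑ i, a i * w i ∧ ∑ i, a i * w i ≤ b₀) ∧
            (∀ i ∈ I ∪ K, w i < v i) ∧ (∀ i ∉ I ∪ K, w i = v i)) := by
  classical
  have tri : ∀ i, 0 < a i ∨ a i < 0 := fun i => by have := ha i; omega
  by_cases hIpos : ∃ i ∈ I, 0 < a i
  · by_cases hIneg : ∃ i ∈ I, a i < 0
    · exfalso
      obtain ⟨ip, hipI, hap⟩ := hIpos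
      obtain ⟨im, himI, han⟩ := hIneg
      exact hnotapp (appears_mixed a ha a₀ b₀ hab v hthick I ip im hipI himI hap han)
    · push_neg at hIneg
      refine Or.inl ⟨⟨?_, ?_⟩, ?_⟩
      · intro i hi
        have h2 := hIneg i hi
        show 0 < a i
        rcases tri i with h | h <;> omega
      · intro K hKne hKneg
        obtain ⟨ip, hipI, hap⟩ := hIpos
        obtain ⟨im, himK⟩ := hKne
        have han : a im < 0 := hKneg himK
        exact appears_mixed a ha a₀ b₀ hab v hthick (I ∪ K) ip im
          (Set.mem_union_left _ hipI) (Set.mem_union_right _ himK) hap han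
      · rintro ⟨hsub, -⟩
        obtain ⟨ip, hipI, hap⟩ := hIpos
        have h2 : a ip < 0 := hsub hipI
        omega
  · by_cases hIneg : ∃ i ∈ I, a i < 0
    · push_neg at hIpos
      refine Or.inr ⟨⟨?_, ?_⟩, ?_⟩
      · intro i hi
        have h2 := hIpos i hi
        show a i < 0
        rcases tri i with h | h <;> omega
      · intro K hKne hKpos
        obtain ⟨im, himI, han⟩ := hIneg
        obtain ⟨ip, hipK⟩ := hKne
        have hap : 0 < a ip := hKpos hipK
        exact appears_mixed a ha a₀ b₀ hab v hthick (I ∪ K) ip im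
          (Set.mem_union_right _ hipK) (Set.mem_union_left _ himI) hap han
      · rintro ⟨hsub, -⟩
        obtain ⟨im, himI, han⟩ := hIneg
        have h2 : 0 < a im := hsub himI
        omega
    · have hIempty : ∀ i, i ∉ I := by
        intro i hi
        rcases tri i with h | h
        · exact hIpos ⟨i, hi, h⟩
        · exact hIneg ⟨i, hi, h⟩
      rcases hthick with ⟨h1, h2⟩ | ⟨h1, h2⟩ | ⟨h1, h2⟩
      · exact absurd ⟨v, ⟨h1, h2⟩, fun i hi => absurd hi (hIempty i), fun i _ => rfl⟩ hnotapp
      · refine Or.inr ⟨⟨fun i hi => absurd hi (hIempty i), ?_⟩, ?_⟩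
        · intro K hKne hKpos
          obtain ⟨ip, hipK⟩ := hKne
          have hap : 0 < a ip := hKpos hipK
          have hIK : I ∪ K = K := by
            ext i; simp [hIempty i]
          rw [hIK]
          set σ := ∑ i, if i ∈ K then a i else 0 with hσ
          have hσle : σ ≤ ∑ i ∈ univ.filter (fun i => 0 < a i), a i := by
            rw [Finset.sum_filter, hσ]
            apply Finset.sum_le_sum
            intro i _
            by_cases hk : i ∈ K <;> by_cases hp : 0 < a i <;>
              simp only [hk, hp, if_true, if_false] <;>
              first
                | omega
                | exact absurd (hKpos hk) hp
          have hpη : a ip ≤ ∑ i ∈ univ.filter (fun i => 0 < a i), a i :=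
            Finset.single_le_sum (fun i hi => le_of_lt (Finset.mem_filter.mp hi).2)
              (Finset.mem_filter.mpr ⟨mem_univ _, hap⟩)
          obtain ⟨m, hm0, hmL, hmU⟩ := hit (a ip) ((∑ i, a i * v i) - b₀)
            ((∑ i, a i * v i) - a₀) σ hap (by omega) (by omega)
          obtain ⟨t, ht1, ht0, hts⟩ := pure_t a K ip hipK m hm0
          refine sum_witness a v t a₀ b₀ K ht1 ht0 ?_ ?_ <;> rw [hts, ← hσ] <;> linarith
        · rintro ⟨-, hall⟩
          obtain ⟨im, han⟩ := hneg
          have hss : ({im} : Set (Fin N)) ⊆ {i | a i < 0} := by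
            intro x hx
            have : x = im := hx
            show a x < 0
            rw [this]; exact han
          have happ := hall {im} ⟨im, rfl⟩ hss
          rw [show I ∪ {im} = {im} from by ext i; simp [hIempty i]] at happ
          exact noappear_neg a v a₀ b₀ {im} im rfl
            (fun i hi => by have : i = im := hi; rw [this]; exact han) h1 happ
      · refine Or.inl ⟨⟨fun i hi => absurd hi (hIempty i), ?_⟩, ?_⟩
        · intro K hKne hKneg
          obtain ⟨im, himK⟩ := hKne
          have han : a im < 0 := hKneg himK
          have hIK : I ∪ K = K := by
            ext i; simp [hIempty i]
          rw [hIK]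
          set σ := ∑ i, if i ∈ K then a i else 0 with hσ
          have hσneg : -σ = ∑ i, (if i ∈ K then -a i else 0) := by
            rw [hσ, ← Finset.sum_neg_distrib]
            exact Finset.sum_congr rfl fun i _ => by split <;> ring
          have hσle : -σ ≤ ∑ i ∈ univ.filter (fun i => a i < 0), -a i := by
            rw [Finset.sum_filter, hσneg]
            apply Finset.sum_le_sum
            intro i _
            by_cases hk : i ∈ K <;> by_cases hp : a i < 0 <;>
              simp only [hk, hp, if_true, if_false] <;>
              first
                | omega
                | exact absurd (hKneg hk) hp
          have hnη : -a im ≤ ∑ i ∈ univ.filter (fun i => a i < 0), -a i :=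
            Finset.single_le_sum (f := fun i => -a i)
              (fun i hi => by
                have h := (Finset.mem_filter.mp hi).2
                show (0:ℤ) ≤ -a i
                omega)
              (Finset.mem_filter.mpr ⟨mem_univ _, han⟩)
          obtain ⟨m, hm0, hmL, hmU⟩ := hit (-a im) (a₀ - ∑ i, a i * v i)
            (b₀ - ∑ i, a i * v i) (-σ) (by omega) (by omega) (by omega)
          obtain ⟨t, ht1, ht0, hts⟩ := pure_t a K im himK m hm0
          refine sum_witness a v t a₀ b₀ K ht1 ht0 ?_ ?_ <;> rw [hts, ← hσ] <;>
            nlinarith [hmL, hmU]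
        · rintro ⟨-, hall⟩
          obtain ⟨ip, hap⟩ := hpos
          have hss : ({ip} : Set (Fin N)) ⊆ {i | 0 < a i} := by
            intro x hx
            have : x = ip := hx
            show 0 < a x
            rw [this]; exact hap
          have happ := hall {ip} ⟨ip, rfl⟩ hss
          rw [show I ∪ {ip} = {ip} from by ext i; simp [hIempty i]] at happ
          exact noappear_pos a v a₀ b₀ {ip} ip rfl
            (fun i hi => by have : i = ip := hi; rw [this]; exact hap) h1 happ
end

section
/- Let a₀ ≤ b₀ be integers with b₀ − a₀ + 1 ≥ η₊. Let I ⊆ [N] with [N]₊ ⊄ I, and let x ∈ ℝ^N satisfy x_i ∈ ℤ for every i ∈ I and μ(x) > b₀. Then there exists v ∈ ℤ^N with a₀ ≤ μ(v) ≤ b₀, v_i = x_i for all i ∈ I, and v_i ≤ x_i for all i ∈ [N]. -/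
open Finset

/-- The key lattice-point construction in the proof of Theorem thm:slice: given
`b₀ − a₀ + 1 ≥ η₊`, `I` not containing all of `[N]₊`, and `x` with integer coordinates on `I`
and `μ(x) > b₀`, there is `v ∈ ℤ^N` with `a₀ ≤ μ(v) ≤ b₀`, `v = x` on `I`, `v ≤ x`. -/
theorem lattice_point_below_with_window_weight
    (N : ℕ) (hN : 1 ≤ N) (a : Fin N → ℤ) (ha : ∀ i, a i ≠ 0)
    (hpos : ∃ i, 0 < a i) (hneg : ∃ i, a i < 0)
    (a₀ b₀ : ℤ) (hab : a₀ ≤ b₀)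
    (hW : (∑ i ∈ univ.filter fun i => 0 < a i, a i) ≤ b₀ - a₀ + 1)
    (I : Set (Fin N)) (hI : ¬ ({i | 0 < a i} ⊆ I))
    (x : Fin N → ℝ) (hx : ∀ i ∈ I, ∃ z : ℤ, x i = (z : ℝ))
    (hμ : (b₀ : ℝ) < ∑ i, (a i : ℝ) * x i) :
    ∃ v : Fin N → ℤ,
      (a₀ ≤ ∑ i, a i * v i ∧ ∑ i, a i * v i ≤ b₀) ∧
      (∀ i ∈ I, (v i : ℝ) = x i) ∧ (∀ i, (v i : ℝ) ≤ x i) := by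
  classical
  obtain ⟨j, hja, hjI⟩ := Set.not_subset.mp hI
  have hj : 0 < a j := hja
  set w : Fin N → ℤ := fun i => ⌊x i⌋ with hw
  set S : ℤ := ∑ i, a i * w i with hS
  set η : ℤ := ∑ i ∈ univ.filter fun i => 0 < a i, a i with hη
  have hjη : a j ≤ η := by
    apply Finset.single_le_sum (f := a) (fun i hi => le_of_lt (mem_filter.mp hi).2)
    simp [hj]
  -- lower bound on S
  have hηmax : η = ∑ i, max (a i) 0 := by
    rw [hη, Finset.sum_filter]
    apply Finset.sum_congr rfl
    intro i _
    rcases lt_or_ge 0 (a i) with h | h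
    · simp [h, le_of_lt h]
    · simp [not_lt.mpr h, h]
  have hterm : ∀ i : Fin N, (a i : ℝ) * x i - ((max (a i) 0 : ℤ) : ℝ) ≤ (a i : ℝ) * w i := by
    intro i
    have hf1 : x i - 1 ≤ (w i : ℝ) := by
      have := Int.sub_one_lt_floor (x i); linarith
    have hf2 : (w i : ℝ) ≤ x i := Int.floor_le (x i)
    rcases lt_or_ge 0 (a i) with h | h
    · have hm : ((max (a i) 0 : ℤ) : ℝ) = (a i : ℝ) := by
        rw [max_eq_left h.le]
      rw [hm]
      have hca : (0:ℝ) < (a i : ℝ) := by exact_mod_cast h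
      nlinarith
    · have hm : ((max (a i) 0 : ℤ) : ℝ) = 0 := by
        rw [max_eq_right h]; simp
      rw [hm]
      have hca : ((a i : ℝ)) ≤ 0 := by exact_mod_cast h
      nlinarith
  have hSlb : (a₀ : ℝ) - 1 < (S : ℝ) := by
    have hsum : (∑ i, (a i : ℝ) * x i) - ((η : ℤ) : ℝ) ≤ (S : ℝ) := by
      have : (S : ℝ) = ∑ i, (a i : ℝ) * (w i : ℝ) := by
        rw [hS]; push_cast; ring_nf
      rw [this, hηmax]
      push_cast
      rw [← Finset.sum_sub_distrib]
      exact Finset.sum_le_sum fun i _ => by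
        have := hterm i; push_cast at this ⊢; linarith
    have hηW : (η : ℝ) ≤ (b₀ : ℝ) - a₀ + 1 := by exact_mod_cast hW
    linarith
  have hSa₀ : a₀ ≤ S := by
    have : (a₀ : ℝ) - 1 < (S : ℝ) := hSlb
    have : a₀ - 1 < S := by exact_mod_cast this
    omega
  set m : ℤ := (S - b₀ + a j - 1) / a j with hm
  set t : ℤ := max 0 m with ht
  have htnn : 0 ≤ t := le_max_left _ _
  refine ⟨fun i => w i - if i = j then t else 0, ?_, ?_, ?_⟩
  · have hsum : (∑ i, a i * (w i - if i = j then t else 0)) = S - a j * t := by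
      simp only [mul_sub]
      rw [Finset.sum_sub_distrib]
      congr 1
      simp [mul_ite, Finset.sum_ite_eq']
    rw [hsum]
    rcases le_or_gt m 0 with hm0 | hm0
    · have ht0 : t = 0 := by omega
      rw [ht0]
      constructor
      · omega
      · -- S ≤ b₀ : since m ≤ 0, ¬ (1 ≤ m), so ¬ (a j ≤ S - b₀ + a j - 1)
        by_contra hcon
        push_neg at hcon
        have h1 : 1 ≤ m := by
          rw [hm, Int.le_ediv_iff_mul_le hj]
          omega
        omega
    · have ht1 : t = m := by omega
      rw [ht1]
      have hdm : a j * m + (S - b₀ + a j - 1) % a j = S - b₀ + a j - 1 :=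
        Int.mul_ediv_add_emod _ _
      have hr1 : 0 ≤ (S - b₀ + a j - 1) % a j := Int.emod_nonneg _ (ne_of_gt hj)
      have hr2 : (S - b₀ + a j - 1) % a j < a j := Int.emod_lt_of_pos _ hj
      constructor
      · -- S - a j * m = b₀ - a j + 1 + r ≥ b₀ - a j + 1 ≥ a₀
        omega
      · omega
  · intro i hiI
    have hne : i ≠ j := fun h => hjI (h ▸ hiI)
    obtain ⟨z, hz⟩ := hx i hiI
    simp only [hne, if_neg hne]
    rw [hz]
    norm_cast
    simp [hw, hz, Int.floor_intCast]
  · intro i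
    have h1 : (w i - if i = j then t else 0) ≤ w i := by split <;> omega
    have h2 : ((w i - if i = j then t else 0 : ℤ) : ℝ) ≤ (w i : ℝ) := by exact_mod_cast h1
    exact le_trans h2 (Int.floor_le (x i))
end

section
/- Let I be a nonempty finite set and a : I → ℤ with a_i ≠ 0 for all i, and suppose I₊ := {i ∈ I : a_i > 0} is nonempty. Set η = ∑_{i∈I₊} a_i. Let a₀ ≤ b₀ be integers with b₀ − a₀ + 1 ≥ η. Then for every integer m > b₀ there exist positive integers c_i (i ∈ I) such that a₀ ≤ m − ∑_{i∈I} c_i a_i ≤ b₀. -/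
open Finset

/-- The arithmetic heart of Lemma lm:leftright: if the interval `[a₀, b₀]` contains at least
`η = ∑_{a_i>0} a_i` integers, then from any integer `m > b₀` one can reach the interval by
subtracting a positive integer combination `∑ c_i a_i`. -/
theorem reach_window_by_positive_combination
    {ι : Type*} [Fintype ι] [Nonempty ι] (a : ι → ℤ)
    (ha : ∀ i, a i ≠ 0) (hpos : ∃ i, 0 < a i)
    (a₀ b₀ : ℤ) (hab : a₀ ≤ b₀)
    (hW : (∑ i ∈ univ.filter fun i => 0 < a i, a i) ≤ b₀ - a₀ + 1)
    (m : ℤ) (hm : b₀ < m) :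
    ∃ c : ι → ℤ, (∀ i, 0 < c i) ∧
      a₀ ≤ m - ∑ i, c i * a i ∧ m - ∑ i, c i * a i ≤ b₀ := by
  classical
  obtain ⟨j, hj⟩ := hpos
  set η : ℤ := ∑ i ∈ univ.filter fun i => 0 < a i, a i with hη
  have haj : a j ≤ η := by
    refine Finset.single_le_sum (f := a) (fun i hi => ?_) ?_
    · exact le_of_lt (mem_filter.mp hi).2
    · simp [hj]
  set T : ℤ := ∑ i, a i with hT
  have hTη : T ≤ η := by
    rw [hT, ← Finset.sum_filter_add_sum_filter_not univ (fun i => 0 < a i) a]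
    have : (∑ i ∈ univ.filter fun i => ¬ 0 < a i, a i) ≤ 0 := by
      apply Finset.sum_nonpos
      intro i hi
      exact le_of_not_gt (mem_filter.mp hi).2
    linarith
  set x : ℤ := m - T with hx
  have hxa₀ : a₀ ≤ x := by
    have : η ≤ b₀ - a₀ + 1 := hW
    omega
  set q : ℤ := (x - a₀) / a j with hq
  have hq0 : 0 ≤ q := Int.ediv_nonneg (by omega) (le_of_lt hj)
  have hmod : x - q * a j = a₀ + (x - a₀) % a j := by
    have := Int.mul_ediv_add_emod (x - a₀) (a j)
    rw [hq, mul_comm]; omega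
  refine ⟨fun i => if i = j then 1 + q else 1, fun i => by by_cases h : i = j <;> simp [h] <;> omega, ?_⟩
  have hsum : ∑ i, (if i = j then 1 + q else 1) * a i = T + q * a j := by
    have : ∀ i, (if i = j then 1 + q else 1) * a i
        = a i + (if i = j then q * a j else 0) := by
      intro i; by_cases h : i = j <;> simp [h] <;> ring
    simp only [this, Finset.sum_add_distrib, Finset.sum_ite_eq', mem_univ, if_true, hT]
  rw [hsum]
  have h1 : 0 ≤ (x - a₀) % a j := Int.emod_nonneg _ (ne_of_gt hj)
  have h2 : (x - a₀) % a j < a j := Int.emod_lt_of_pos _ hj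
  have : η ≤ b₀ - a₀ + 1 := hW
  constructor <;> omega
end
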